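/- Let R be a finite ring with identity, G ≤ Sym({1,…,n}) acting on V = R^n by coordinate permutation, and H ≤ G with |H| invertible in R. If C ⊆ V is a left G-code, then the H-dual of Cθ_H inside Vθ_H satisfies ⊥_H(Cθ_H) = ((⊥C)θ_H)M_H, where M_H is the H-orbit length map. -/

import Mathlib

/-!
Both sides consist of `H`-fixed vectors, which form the range of `θ_H`. Two facts drive the
proof. First, `θ_H` is self-adjoint for the standard inner product and, `C` being `H`-stable,
maps `C` into itself; hence it also maps `⊥C` into itself. Second, for `H`-fixed `w` and `x`
the `H`-inner product of `w M_H` with `x` is the standard inner product of `w` and `x`, because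
the orbit `ω_i` contributes `m_i w_i x_i` to the latter. As every `m_i` divides `|H|`, `M_H` is
invertible on fixed vectors, and `v ∈ ⊥_H(Cθ_H)` exactly when `v M_H⁻¹ ∈ ⊥C`.
-/

/-- Coordinate-permutation action: `(v · g) i = v (g⁻¹ i)`. -/
def pAct {α : Type} {n : ℕ} (g : Equiv.Perm (Fin n)) (v : Fin n → α) : Fin n → α :=
  fun i => v (g⁻¹ i)

/-- Hayden's operator `θ_H`: `v θ_H = |H|⁻¹ ∑_{h ∈ H} v h`. -/
noncomputable def theta {R : Type} [Ring R] {n : ℕ} (H : Subgroup (Equiv.Perm (Fin n)))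
    (v : Fin n → R) : Fin n → R :=
  fun i => Ring.inverse ((Nat.card H : R)) * ∑ᶠ h ∈ (H : Set (Equiv.Perm (Fin n))), v (h⁻¹ i)

/-- The left dual of a set of vectors in `R^n`. -/
def leftDual {R : Type} [Ring R] {n : ℕ} (S : Set (Fin n → R)) : Set (Fin n → R) :=
  {u | ∀ v ∈ S, ∑ i, u i * v i = 0}

/-- The orbit of a coordinate `j` under the permutation group `H`. -/
def orbSet {n : ℕ} (H : Subgroup (Equiv.Perm (Fin n))) (j : Fin n) : Set (Fin n) :=
  {m | ∃ h ∈ H, h j = m}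

/-- The `H`-orbit length map `M_H`, multiplying the `j`-th coordinate
by the size of the `H`-orbit of `j`. -/
noncomputable def MH {R : Type} [Ring R] {n : ℕ} (H : Subgroup (Equiv.Perm (Fin n)))
    (v : Fin n → R) : Fin n → R :=
  fun j => (Nat.card (orbSet H j) : R) * v j

def IsFixedBy {n : ℕ} {R : Type} (H : Subgroup (Equiv.Perm (Fin n))) (v : Fin n → R) : Prop :=
  ∀ h ∈ H, ∀ i, v (h i) = v i

section

open scoped Classical

variable {n : ℕ} {R : Type} (H : Subgroup (Equiv.Perm (Fin n)))

theorem orbSet_eq_of_mem {j k : Fin n} (hk : k ∈ orbSet H j) : orbSet H k = orbSet H j := by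
  obtain ⟨g, hg, rfl⟩ := hk
  ext m
  constructor
  · rintro ⟨g', hg', rfl⟩
    exact ⟨g' * g, H.mul_mem hg' hg, rfl⟩
  · rintro ⟨g', hg', rfl⟩
    exact ⟨g' * g⁻¹, H.mul_mem hg' (H.inv_mem hg), by simp [Equiv.Perm.mul_apply]⟩

theorem orbSet_eq_orbit (j : Fin n) : orbSet H j = MulAction.orbit H j := by
  ext m
  constructor
  · rintro ⟨g, hg, rfl⟩; exact ⟨⟨g, hg⟩, rfl⟩
  · rintro ⟨⟨g, hg⟩, rfl⟩; exact ⟨g, hg, rfl⟩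

variable {H} in
theorem IsFixedBy.apply_eq_of_mem_orbSet {v : Fin n → R} (hv : IsFixedBy H v) {j k : Fin n}
    (hk : k ∈ orbSet H j) : v k = v j := by
  obtain ⟨g, hg, rfl⟩ := hk
  exact hv g hg j

variable [Ring R]

theorem isUnit_card_orbSet (hH : IsUnit (Nat.card H : R)) (j : Fin n) :
    IsUnit (Nat.card (orbSet H j) : R) := by
  obtain ⟨s, hs⟩ : Nat.card (orbSet H j) ∣ Nat.card H := by
    rw [orbSet_eq_orbit, Nat.card_coe_set_eq, ← MulAction.index_stabilizer]
    exact Subgroup.index_dvd_card _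
  rw [hs, Nat.cast_mul] at hH
  exact ((Nat.cast_commute _ _).isUnit_mul_iff.1 hH).1

variable {H}

theorem IsFixedBy.orbit_mul {v : Fin n → R} (hv : IsFixedBy H v) (f : Set (Fin n) → R) :
    IsFixedBy H (fun j => f (orbSet H j) * v j) := by
  intro h hh i
  simp only [orbSet_eq_of_mem H ⟨h, hh, rfl⟩, hv h hh i]

theorem sum_eq_sum_rep {t : ℕ} {rep : Fin t → Fin n}
    (hrep : ∀ j : Fin n, ∃! i : Fin t, j ∈ orbSet H (rep i)) {F : Fin n → R}
    (hF : ∀ i j, j ∈ orbSet H (rep i) → F j = F (rep i)) :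
    ∑ j, F j = ∑ i : Fin t, (Nat.card (orbSet H (rep i)) : R) * F (rep i) := by
  choose σ hσ hσuniq using hrep
  rw [← Finset.sum_fiberwise Finset.univ σ F]
  refine Finset.sum_congr rfl fun i _ => ?_
  have hfib : Finset.univ.filter (σ · = i) = (orbSet H (rep i)).toFinset := by
    ext j
    simp only [Finset.mem_filter, Finset.mem_univ, true_and, Set.mem_toFinset]
    exact ⟨fun h => h ▸ hσ j, fun hj => (hσuniq j i hj).symm⟩
  rw [hfib, Finset.sum_congr rfl (fun j hj => hF i j (Set.mem_toFinset.1 hj)),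
    Finset.sum_const, Set.toFinset_card, ← Nat.card_eq_fintype_card, nsmul_eq_mul]

theorem sum_rep_MH_mul {t : ℕ} {rep : Fin t → Fin n}
    (hrep : ∀ j : Fin n, ∃! i : Fin t, j ∈ orbSet H (rep i)) {w x : Fin n → R}
    (hw : IsFixedBy H w) (hx : IsFixedBy H x) :
    ∑ i, MH H w (rep i) * x (rep i) = ∑ j, w j * x j := by
  rw [sum_eq_sum_rep hrep fun i j hj => by
    rw [hw.apply_eq_of_mem_orbSet hj, hx.apply_eq_of_mem_orbSet hj]]
  simp only [MH, mul_assoc]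

variable (H)

theorem theta_apply (v : Fin n → R) (i : Fin n) :
    theta H v i = Ring.inverse (Nat.card H : R) * ∑ h : H, v ((h : Equiv.Perm (Fin n))⁻¹ i) := by
  unfold theta
  rw [finsum_mem_eq_toFinset_sum]
  exact congrArg _ (Finset.sum_subtype _ (fun x => by simp) _)

theorem card_mul_theta_apply (hH : IsUnit (Nat.card H : R)) (v : Fin n → R) (i : Fin n) :
    (Nat.card H : R) * theta H v i = ∑ h : H, v ((h : Equiv.Perm (Fin n))⁻¹ i) := by
  rw [theta_apply, ← mul_assoc, Ring.mul_inverse_cancel _ hH, one_mul]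

theorem isFixedBy_theta (v : Fin n → R) : IsFixedBy H (theta H v) := by
  intro h hh i
  rw [theta_apply, theta_apply]
  congr 1
  refine Fintype.sum_equiv (Equiv.mulLeft (⟨h⁻¹, H.inv_mem hh⟩ : H)) _ _ fun k => ?_
  simp [mul_inv_rev, Equiv.Perm.mul_apply]

theorem theta_eq_self (hH : IsUnit (Nat.card H : R)) {v : Fin n → R} (hv : IsFixedBy H v) :
    theta H v = v := by
  funext i
  refine hH.mul_left_cancel ?_
  rw [card_mul_theta_apply H hH, Finset.sum_congr rfl fun k _ => ?_, Finset.sum_const,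
    Finset.card_univ, nsmul_eq_mul, Nat.card_eq_fintype_card]
  simpa using hv _ (H.inv_mem k.2) i

theorem range_theta (hH : IsUnit (Nat.card H : R)) :
    Set.range (theta (R := R) H) = {v | IsFixedBy H v} :=
  Set.ext fun v => ⟨by rintro ⟨u, rfl⟩; exact isFixedBy_theta H u,
    fun hv => ⟨v, theta_eq_self H hH hv⟩⟩

theorem sum_theta_mul (hH : IsUnit (Nat.card H : R)) (u c : Fin n → R) :
    ∑ j, theta H u j * c j = ∑ j, u j * theta H c j := by
  refine hH.mul_left_cancel ?_
  calc (Nat.card H : R) * ∑ j, theta H u j * c j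
      = ∑ j, ∑ h : H, u ((h : Equiv.Perm (Fin n))⁻¹ j) * c j := by
        simp only [Finset.mul_sum, ← mul_assoc, card_mul_theta_apply H hH, Finset.sum_mul]
    _ = ∑ h : H, ∑ j, u j * c ((h : Equiv.Perm (Fin n)) j) := by
        rw [Finset.sum_comm]
        refine Finset.sum_congr rfl fun h _ => ?_
        rw [← Equiv.sum_comp (h : Equiv.Perm (Fin n))]
        simp
    _ = ∑ h : H, ∑ j, u j * c ((h : Equiv.Perm (Fin n))⁻¹ j) := by
        rw [← Equiv.sum_comp (Equiv.inv H)]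
        simp
    _ = (Nat.card H : R) * ∑ j, u j * theta H c j := by
        simp only [Finset.mul_sum, fun r s : R => (Nat.cast_commute (Nat.card H) r).left_comm s,
          card_mul_theta_apply H hH]
        exact Finset.sum_comm

theorem theta_mem {C : Submodule R (Fin n → R)} (hC : ∀ c ∈ C, ∀ h ∈ H, pAct h c ∈ C)
    {c : Fin n → R} (hc : c ∈ C) : theta H c ∈ C := by
  have htheta :
      theta H c = Ring.inverse (Nat.card H : R) • ∑ h : H, pAct (h : Equiv.Perm (Fin n)) c := by
    funext i
    simp [theta_apply, pAct, Finset.sum_apply]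
  rw [htheta]
  exact C.smul_mem _ (C.sum_mem fun h _ => hC c hc h h.2)

theorem theta_mem_leftDual (hH : IsUnit (Nat.card H : R)) {C : Submodule R (Fin n → R)}
    (hC : ∀ c ∈ C, ∀ h ∈ H, pAct h c ∈ C) {u : Fin n → R}
    (hu : u ∈ leftDual (C : Set (Fin n → R))) : theta H u ∈ leftDual (C : Set (Fin n → R)) :=
  fun c hc => by rw [sum_theta_mul H hH]; exact hu _ (theta_mem H hC hc)

end

theorem stmt3_general {n t : ℕ} {R : Type} [Ring R]
    (G H : Subgroup (Equiv.Perm (Fin n))) (hHG : H ≤ G)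
    (hH : IsUnit ((Nat.card H : R)))
    (rep : Fin t → Fin n)
    (hrep : ∀ j : Fin n, ∃! i : Fin t, j ∈ orbSet H (rep i))
    (C : Submodule R (Fin n → R))
    (hC : ∀ c ∈ C, ∀ g ∈ G, pAct g c ∈ C) :
    {v ∈ Set.range (theta (R := R) H) |
        ∀ u ∈ theta (R := R) H '' (C : Set (Fin n → R)),
          ∑ i : Fin t, v (rep i) * u (rep i) = 0}
      = MH (R := R) H '' (theta (R := R) H '' leftDual (C : Set (Fin n → R))) := by
  have hCH : ∀ c ∈ C, ∀ h ∈ H, pAct h c ∈ C := fun c hc h hh => hC c hc h (hHG hh)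
  ext v
  simp only [range_theta H hH, Set.mem_ofPred_eq, Set.mem_image, exists_exists_and_eq_and]
  constructor
  · rintro ⟨hv, hvC⟩
    set w : Fin n → R := fun j => Ring.inverse (Nat.card (orbSet H j) : R) * v j
    have hw : IsFixedBy H w := hv.orbit_mul fun s => Ring.inverse (Nat.card s : R)
    have hMw : MH H w = v := funext fun j => by
      simp only [MH, w, ← mul_assoc, Ring.mul_inverse_cancel _ (isUnit_card_orbSet H hH j),
        one_mul]
    refine ⟨w, fun c hc => ?_, by rw [theta_eq_self H hH hw, hMw]⟩
    rw [← theta_eq_self H hH hw, sum_theta_mul H hH, ← sum_rep_MH_mul hrep hw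
      (isFixedBy_theta H c), hMw]
    exact hvC _ ⟨c, hc, rfl⟩
  · rintro ⟨u, hu, rfl⟩
    have hw := isFixedBy_theta H u
    refine ⟨hw.orbit_mul fun s => (Nat.card s : R), ?_⟩
    rintro _ ⟨c, hc, rfl⟩
    rw [sum_rep_MH_mul hrep hw (isFixedBy_theta H c)]
    exact theta_mem_leftDual H hH hCH hu _ (theta_mem H hCH hc)

/-- `⊥_H (Cθ_H) = ((⊥C)θ_H) M_H`, where the `H`-dual is taken inside `Vθ_H`
(the range of `θ_H`) with respect to the `H`-inner product
`(v,u)_H = ∑ i, v_(rep i) * u_(rep i)` over orbit representatives. -/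
theorem stmt3 {n t : ℕ} {R : Type} [Ring R] [Fintype R]
    (G H : Subgroup (Equiv.Perm (Fin n))) (hHG : H ≤ G)
    (hH : IsUnit ((Nat.card H : R)))
    (rep : Fin t → Fin n)
    (hrep : ∀ j : Fin n, ∃! i : Fin t, j ∈ orbSet H (rep i))
    (C : Submodule R (Fin n → R))
    (hC : ∀ c ∈ C, ∀ g ∈ G, pAct g c ∈ C) :
    {v ∈ Set.range (theta (R := R) H) |
        ∀ u ∈ theta (R := R) H '' (C : Set (Fin n → R)),
          ∑ i : Fin t, v (rep i) * u (rep i) = 0}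
      = MH (R := R) H '' (theta (R := R) H '' leftDual (C : Set (Fin n → R))) :=
  stmt3_general G H hHG hH rep hrep C hC
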